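/- arXiv:2510.03109 — 5 statements merged into one kernel-verified Lean document; each statement's English description precedes it below -/
import Mathlib

section
/- Let 𝒢 ⊆ 𝒫(Θ) and suppose: D(Q,Π) ≤ M for all Q ∈ 𝒬 and all Π ∈ 𝒢; some Q ∈ 𝒬 has T_n(Q) < ∞; and there exists P_n^⋆ ∈ 𝒬 with J_{L_n}(P_n^⋆) ≤ J_{L_n}(Q) for all Q ∈ 𝒬. Then for every prior Π ∈ 𝒢, every minimiser Q_n of T_n over 𝒬 lies in the set ℛ_n^⋆ := {Q ∈ 𝒬 : J_{L_n}(Q) − J_{L_n}(P_n^⋆) ≤ M/(nβ)}. -/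
open MeasureTheory Filter Topology
open scoped ENNReal NNReal

/-- The loss functional `J_f(ν) := ∫ f dν`, valued in the extended reals; for `f`
bounded below it takes values in `(-∞, ∞]`. -/
noncomputable def J {Θ : Type*} [MeasurableSpace Θ] (f : Θ → ℝ) (ν : Measure Θ) : EReal :=
  ((∫⁻ θ, ENNReal.ofReal (f θ) ∂ν : ℝ≥0∞) : EReal) -
    ((∫⁻ θ, ENNReal.ofReal (-f θ) ∂ν : ℝ≥0∞) : EReal)

/-- The GVI objective `T n β L D Π Q := n · J_L(Q) + (1/β) · D(Q, Π)`. -/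
noncomputable def T {Θ : Type*} [MeasurableSpace Θ] (n : ℕ) (β : ℝ) (L : Θ → ℝ)
    (D : ProbabilityMeasure Θ → ProbabilityMeasure Θ → ℝ)
    (prior Q : ProbabilityMeasure Θ) : EReal :=
  ((n : ℝ) : EReal) * J L (Q : Measure Θ) + ((1 / β * D Q prior : ℝ) : EReal)

/-- `f : Θ → ℝ` is coercive if for every `c` there is a compact set outside of which `f > c`. -/
def Coercive {Θ : Type*} [TopologicalSpace Θ] (f : Θ → ℝ) : Prop :=
  ∀ c : ℝ, ∃ K : Set Θ, IsCompact K ∧ ∀ θ ∉ K, c < f θ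

/-- The mixture `a·μ + (1−a)·ν` of two probability measures. -/
noncomputable def mix {Θ : Type*} [MeasurableSpace Θ] (μ ν : ProbabilityMeasure Θ) (a : ℝ)
    (ha0 : 0 ≤ a) (ha1 : a ≤ 1) : ProbabilityMeasure Θ :=
  ⟨ENNReal.ofReal a • (μ : Measure Θ) + ENNReal.ofReal (1 - a) • (ν : Measure Θ), by
    constructor
    simp only [Measure.coe_add, Pi.add_apply, Measure.smul_apply, smul_eq_mul, measure_univ,
      mul_one]
    rw [← ENNReal.ofReal_add ha0 (by linarith)]
    norm_num⟩

/-- The Dirac probability measure at `θ`. -/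
noncomputable def diracProb {Θ : Type*} [MeasurableSpace Θ] (θ : Θ) : ProbabilityMeasure Θ :=
  ⟨Measure.dirac θ, inferInstance⟩

/-- `𝒬` allows for Dirac measures: it is weak*-closed and the infimum of `J_f` over `𝒬`
equals the infimum of `f` over `Θ`, for every bounded below, lsc, coercive `f`. -/
def AllowsDiracs {Θ : Type*} [MeasurableSpace Θ] [TopologicalSpace Θ] [OpensMeasurableSpace Θ]
    (𝒬 : Set (ProbabilityMeasure Θ)) : Prop :=
  IsClosed 𝒬 ∧ ∀ f : Θ → ℝ, (∃ b, ∀ θ, b ≤ f θ) → LowerSemicontinuous f → Coercive f →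
    (⨅ ν : 𝒬, J f (ν.1 : Measure Θ)) = ((⨅ θ, f θ : ℝ) : EReal)

/-! Comparing a minimiser `Qₙ` of the GVI objective with `P⋆ ∈ 𝒬` gives
`n J(Qₙ) ≤ n J(Qₙ) + D(Qₙ, Π)/β ≤ n J(P⋆) + D(P⋆, Π)/β ≤ n J(P⋆) + M/β`, and one divides by `n`.
As `J` is extended-real valued, the division is done case by case: `x - ⊤ = ⊥`, and
`n x ≤ ⊥` forces `x = ⊥`. -/

theorem EReal.sub_le_coe_div_of_mul_le_mul_add {x y : EReal} {t c : ℝ} (ht : 0 < t)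
    (h : (t : EReal) * x ≤ t * y + c) : x - y ≤ ((c / t : ℝ) : EReal) := by
  induction y using EReal.rec with
  | bot =>
    rw [coe_mul_bot_of_pos ht, bot_add, le_bot_iff, mul_eq_bot] at h
    obtain rfl : x = ⊥ := by simpa [ht, ht.not_gt] using h
    simp
  | top => simp
  | coe y =>
    induction x using EReal.rec with
    | bot => simp
    | top => simp [coe_mul_top_of_pos ht, ← coe_mul, ← coe_add] at h
    | coe x =>
      norm_cast at h ⊢
      rw [le_div_iff₀ ht]
      linarith

theorem mul_J_le_of_T_le {Θ : Type*} [MeasurableSpace Θ] {n : ℕ} {β M : ℝ} {L : Θ → ℝ}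
    {D : ProbabilityMeasure Θ → ProbabilityMeasure Θ → ℝ} {Pr Q P : ProbabilityMeasure Θ}
    (hβ : 0 < β) (hDQ : 0 ≤ D Q Pr) (hDP : D P Pr ≤ M) (hT : T n β L D Pr Q ≤ T n β L D Pr P) :
    ((n : ℝ) : EReal) * J L Q ≤ ((n : ℝ) : EReal) * J L P + ((M / β : ℝ) : EReal) :=
  calc ((n : ℝ) : EReal) * J L Q
      ≤ ((n : ℝ) : EReal) * J L Q + ((1 / β * D Q Pr : ℝ) : EReal) :=
        le_add_of_nonneg_right (EReal.coe_nonneg.2 (by positivity))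
    _ ≤ ((n : ℝ) : EReal) * J L P + ((1 / β * D P Pr : ℝ) : EReal) := hT
    _ ≤ ((n : ℝ) : EReal) * J L P + ((M / β : ℝ) : EReal) := by
        gcongr
        rw [one_div_mul_eq_div]
        gcongr

theorem gvi_posterior_mem_Rstar_general {Θ : Type*} [MeasurableSpace Θ] (L : Θ → ℝ)
    (𝒬 𝒢 : Set (ProbabilityMeasure Θ))
    (D : ProbabilityMeasure Θ → ProbabilityMeasure Θ → ℝ)
    (hDnn : ∀ P Q : ProbabilityMeasure Θ, 0 ≤ D P Q)
    (M β : ℝ) (hβ : 0 < β) (n : ℕ) (hn : 1 ≤ n)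
    (hDbdd : ∀ Q ∈ 𝒬, ∀ Pr ∈ 𝒢, D Q Pr ≤ M)
    (Pstar : ProbabilityMeasure Θ) (hPstar𝒬 : Pstar ∈ 𝒬) :
    ∀ Pr ∈ 𝒢, ∀ Qn : ProbabilityMeasure Θ, Qn ∈ 𝒬 →
      (∀ Q ∈ 𝒬, T n β L D Pr Qn ≤ T n β L D Pr Q) →
      Qn ∈ 𝒬 ∧ J L (Qn : Measure Θ) - J L (Pstar : Measure Θ) ≤ ((M / (n * β) : ℝ) : EReal) := by
  intro Pr hPr Qn hQn hmin
  refine ⟨hQn, ?_⟩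
  have hgap := mul_J_le_of_T_le hβ (hDnn Qn Pr) (hDbdd Pstar hPstar𝒬 Pr hPr)
    (hmin Pstar hPstar𝒬)
  rw [mul_comm, ← div_div]
  exact EReal.sub_le_coe_div_of_mul_le_mul_add (by exact_mod_cast hn) hgap

/-- With a divergence bounded by `M` on `𝒬 × 𝒢`, a finite element and an empirical
loss minimiser `P⋆ ∈ 𝒬`, every minimiser of the GVI objective lies in
`ℛ⋆ = {Q ∈ 𝒬 : J_L(Q) − J_L(P⋆) ≤ M/(nβ)}`, for every prior in `𝒢`. -/
theorem gvi_posterior_mem_Rstar {Θ : Type*} [TopologicalSpace Θ] [PolishSpace Θ]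
    [MeasurableSpace Θ] [BorelSpace Θ]
    (L : Θ → ℝ) (hLmeas : Measurable L) (hLbdd : ∃ b : ℝ, ∀ θ, b ≤ L θ)
    (𝒬 𝒢 : Set (ProbabilityMeasure Θ))
    (D : ProbabilityMeasure Θ → ProbabilityMeasure Θ → ℝ)
    (hDnn : ∀ P Q : ProbabilityMeasure Θ, 0 ≤ D P Q)
    (M β : ℝ) (hM : 0 < M) (hβ : 0 < β) (n : ℕ) (hn : 1 ≤ n)
    (hDbdd : ∀ Q ∈ 𝒬, ∀ Pr ∈ 𝒢, D Q Pr ≤ M)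
    (hfin : ∀ Pr ∈ 𝒢, ∃ Q ∈ 𝒬, T n β L D Pr Q < (⊤ : EReal))
    (Pstar : ProbabilityMeasure Θ) (hPstar𝒬 : Pstar ∈ 𝒬)
    (hPstar : ∀ Q ∈ 𝒬, J L (Pstar : Measure Θ) ≤ J L (Q : Measure Θ)) :
    ∀ Pr ∈ 𝒢, ∀ Qn : ProbabilityMeasure Θ, Qn ∈ 𝒬 →
      (∀ Q ∈ 𝒬, T n β L D Pr Qn ≤ T n β L D Pr Q) →
      Qn ∈ 𝒬 ∧ J L (Qn : Measure Θ) - J L (Pstar : Measure Θ) ≤ ((M / (n * β) : ℝ) : EReal) :=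
  gvi_posterior_mem_Rstar_general L 𝒬 𝒢 D hDnn M β hβ n hn hDbdd Pstar hPstar𝒬
end

section
/- Suppose: L_n : Θ → ℝ is measurable, bounded below, lower semicontinuous, and coercive; 𝒬 ⊆ 𝒫(Θ) is closed in the weak* topology; D is lower semicontinuous in its first argument (with respect to the weak* topology); D(Q,Π) ≤ M for all Q ∈ 𝒬; there exists P_n^⋆ ∈ 𝒬 with J_{L_n}(P_n^⋆) ≤ J_{L_n}(Q) for all Q ∈ 𝒬; and some Q ∈ 𝒬 has T_n(Q) < ∞. Then there exists Q_n ∈ 𝒬 minimising T_n over 𝒬, i.e. a GVI posterior exists. -/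
open MeasureTheory Filter Topology
open scoped ENNReal NNReal

/-! Shifting `L` by a lower bound `b ≤ 0` writes `T_n(Q) = G(Q) + n b`, where
`G(Q) = n ∫ (L - b) dQ + D(Q, Π) / β` takes values in `[0, ∞]`. The integral of a nonnegative
lower semicontinuous function is weak*-lower semicontinuous in the measure (layer-cake formula
and the portmanteau theorem), so `G` is lower semicontinuous. By Markov's inequality and the
coercivity of `L`, measures with `∫ (L - b) dQ ≤ c < ∞` form a tight family, so by Prokhorov's
theorem the sublevel set `{G ≤ G(Q₀)}` of an element `Q₀` of finite objective is compact, and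
`G` attains its minimum on the closed set `𝒬`. -/

theorem LowerSemicontinuous.exists_isMinOn_of_isCompact_sublevel {X γ : Type*}
    [TopologicalSpace X] [LinearOrder γ] {g : X → γ}
    (hg : LowerSemicontinuous g) {s : Set X} (hs : IsClosed s) {x₀ : X} (hx₀ : x₀ ∈ s)
    (hK : IsCompact {x | g x ≤ g x₀}) : ∃ x ∈ s, IsMinOn g s x := by
  obtain ⟨x, ⟨hxs, -⟩, hx⟩ := LowerSemicontinuousOn.exists_isMinOn
    (s := s ∩ {x | g x ≤ g x₀}) ⟨x₀, hx₀, le_rfl⟩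
    (hK.inter_left hs) (hg.lowerSemicontinuousOn _)
  refine ⟨x, hxs, fun y hy => ?_⟩
  by_cases hy₀ : g y ≤ g x₀
  · exact hx ⟨hy, hy₀⟩
  · exact (hx ⟨hx₀, le_rfl⟩).trans (not_le.mp hy₀).le

theorem Coercive.sub_const {Θ : Type*} [TopologicalSpace Θ] {f : Θ → ℝ} (hf : Coercive f)
    (b : ℝ) : Coercive fun θ => f θ - b := fun c => by
  obtain ⟨K, hK, hfK⟩ := hf (c + b)
  exact ⟨K, hK, fun θ hθ => by linarith [hfK θ hθ]⟩

theorem LowerSemicontinuous.sub_const {X : Type*} [TopologicalSpace X] {f : X → ℝ}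
    (hf : LowerSemicontinuous f) (b : ℝ) : LowerSemicontinuous fun x => f x - b :=
  (continuous_sub_right b).comp_lowerSemicontinuous hf fun _ _ h => sub_le_sub_right h b

namespace MeasureTheory

variable {Ω : Type*} [MeasurableSpace Ω] [TopologicalSpace Ω]

theorem lintegral_le_liminf_lintegral_of_lowerSemicontinuous [OpensMeasurableSpace Ω]
    {μ : Measure Ω} {μs : ℕ → Measure Ω} {f : Ω → ℝ} (hf : LowerSemicontinuous f) (hf₀ : 0 ≤ f)
    (h_opens : ∀ G, IsOpen G → μ G ≤ liminf (fun i => μs i G) atTop) :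
    ∫⁻ x, ENNReal.ofReal (f x) ∂μ ≤
      liminf (fun i => ∫⁻ x, ENNReal.ofReal (f x) ∂(μs i)) atTop := by
  simp_rw [lintegral_eq_lintegral_meas_lt _ (.of_forall hf₀) hf.measurable.aemeasurable]
  calc ∫⁻ t in Set.Ioi 0, μ {x | t < f x}
      ≤ ∫⁻ t in Set.Ioi 0, liminf (fun i => μs i {x | t < f x}) atTop :=
        lintegral_mono fun t => h_opens _ (hf.isOpen_preimage t)
    _ ≤ liminf (fun i => ∫⁻ t in Set.Ioi 0, μs i {x | t < f x}) atTop :=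
        lintegral_liminf_le fun i => Antitone.measurable fun _ _ hst =>
          measure_mono fun _ hx => hst.trans_lt hx

theorem ProbabilityMeasure.lowerSemicontinuous_lintegral [OpensMeasurableSpace Ω]
    [TopologicalSpace.PseudoMetrizableSpace Ω] [TopologicalSpace.SeparableSpace Ω]
    {f : Ω → ℝ} (hf : LowerSemicontinuous f) (hf₀ : 0 ≤ f) :
    LowerSemicontinuous fun Q : ProbabilityMeasure Ω => ∫⁻ x, ENNReal.ofReal (f x) ∂Q := by
  refine lowerSemicontinuous_iff_isClosed_preimage.2 fun c => IsSeqClosed.isClosed ?_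
  intro Qs Q hQs hlim
  calc ∫⁻ x, ENNReal.ofReal (f x) ∂Q
      ≤ liminf (fun k => ∫⁻ x, ENNReal.ofReal (f x) ∂(Qs k)) atTop :=
        lintegral_le_liminf_lintegral_of_lowerSemicontinuous hf hf₀ fun _ hG =>
          ProbabilityMeasure.le_liminf_measure_open_of_tendsto hlim hG
    _ ≤ c := liminf_le_of_frequently_le (.of_forall hQs)

theorem isTightMeasureSet_of_lintegral_le {f : Ω → ℝ} (hf : Coercive f) (hf_meas : Measurable f)
    {S : Set (Measure Ω)} {c : ℝ≥0∞} (hc : c ≠ ⊤)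
    (hS : ∀ μ ∈ S, ∫⁻ x, ENNReal.ofReal (f x) ∂μ ≤ c) : IsTightMeasureSet S := by
  refine isTightMeasureSet_iff_exists_isCompact_measure_compl_le.2 fun ε hε => ?_
  rcases eq_or_ne ε ⊤ with rfl | hε_top
  · exact ⟨∅, isCompact_empty, fun _ _ => le_top⟩
  obtain ⟨N, hN⟩ := ENNReal.exists_nat_gt (ENNReal.div_ne_top hc hε.ne')
  obtain ⟨K, hK, hfK⟩ := hf N
  refine ⟨K, hK, fun μ hμ => ?_⟩
  have markov : (N : ℝ≥0∞) * μ Kᶜ ≤ c := calc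
    (N : ℝ≥0∞) * μ Kᶜ ≤ N * μ {x | (N : ℝ≥0∞) ≤ ENNReal.ofReal (f x)} := by
      gcongr
      intro x hx
      simpa using ENNReal.ofReal_le_ofReal (hfK x hx).le
    _ ≤ ∫⁻ x, ENNReal.ofReal (f x) ∂μ :=
      mul_meas_ge_le_lintegral₀ hf_meas.ennreal_ofReal.aemeasurable _
    _ ≤ c := hS μ hμ
  have hN' : c < N * ε := by
    rwa [ENNReal.div_lt_iff (.inl hε.ne') (.inl hε_top)] at hN
  exact le_of_not_gt fun hlt => (markov.trans_lt hN').not_ge (by gcongr)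

theorem ProbabilityMeasure.isCompact_setOf_lintegral_le [TopologicalSpace.MetrizableSpace Ω]
    [TopologicalSpace.SeparableSpace Ω] [BorelSpace Ω] {f : Ω → ℝ} (hf : LowerSemicontinuous f)
    (hf₀ : 0 ≤ f) (hf_coer : Coercive f) {c : ℝ≥0∞} (hc : c ≠ ⊤) :
    IsCompact {Q : ProbabilityMeasure Ω | ∫⁻ x, ENNReal.ofReal (f x) ∂Q ≤ c} :=
  (isCompact_closure_of_isTightMeasureSet (isTightMeasureSet_of_lintegral_le hf_coer
    hf.measurable hc (by rintro _ ⟨Q, hQ, rfl⟩; exact hQ))).of_isClosed_subset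
    ((lowerSemicontinuous_lintegral hf hf₀).isClosed_preimage c) subset_closure

end MeasureTheory

theorem J_eq_lintegral_sub_add {Ω : Type*} [MeasurableSpace Ω] {f : Ω → ℝ} (hf : Measurable f)
    {b : ℝ} (hb₀ : b ≤ 0) (hb : ∀ x, b ≤ f x) (μ : Measure Ω) [IsProbabilityMeasure μ] :
    J f μ = ((∫⁻ x, ENNReal.ofReal (f x - b) ∂μ : ℝ≥0∞) : EReal) + b := by
  set F := ∫⁻ x, ENNReal.ofReal (f x - b) ∂μ
  set A := ∫⁻ x, ENNReal.ofReal (f x) ∂μ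
  set B := ∫⁻ x, ENNReal.ofReal (-f x) ∂μ
  have hpoint : ∀ x, ENNReal.ofReal (f x - b) + ENNReal.ofReal (-f x) =
      ENNReal.ofReal (f x) + ENNReal.ofReal (-b) := by
    intro x
    rcases le_total 0 (f x) with h | h
    · rw [ENNReal.ofReal_of_nonpos (neg_nonpos.2 h), add_zero,
        ← ENNReal.ofReal_add h (by linarith), sub_eq_add_neg]
    · rw [ENNReal.ofReal_of_nonpos h, zero_add, ← ENNReal.ofReal_add (by linarith [hb x])
        (by linarith)]
      ring_nf
  have hsum : F + B = A + ENNReal.ofReal (-b) := by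
    rw [← lintegral_add_right (g := fun x => ENNReal.ofReal (-f x)) _ hf.neg.ennreal_ofReal,
      lintegral_congr hpoint, lintegral_add_right _ measurable_const, lintegral_const,
      measure_univ, mul_one]
  have hB : B ≠ ⊤ :=
    ((lintegral_mono fun x => ENNReal.ofReal_le_ofReal (by linarith [hb x])).trans_lt
      (by simp : ∫⁻ _, ENNReal.ofReal (-b) ∂μ < ⊤)).ne
  have hsum' : (F : EReal) + B.toReal = A + (-b : ℝ) := by
    rw [EReal.coe_ennreal_toReal hB, ← EReal.coe_ennreal_add, hsum, EReal.coe_ennreal_add,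
      EReal.coe_ennreal_ofReal, max_eq_left (by linarith)]
  have add_coe_add_coe : ∀ (x : EReal) (s t : ℝ), x + s + t = x + ((s + t : ℝ) : EReal) :=
    fun x s t => by rw [add_assoc, EReal.coe_add]
  rw [J, ← EReal.coe_ennreal_toReal hB]
  calc (A : EReal) - B.toReal = A + ((-b : ℝ) : EReal) + ((b - B.toReal : ℝ) : EReal) := by
        rw [add_coe_add_coe, sub_eq_add_neg (A : EReal), ← EReal.coe_neg]; congr 2; ring
    _ = F + b := by rw [← hsum', add_coe_add_coe]; congr 2; ring

section ShiftedObjective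

variable {Θ : Type*} [MeasurableSpace Θ] (n : ℕ) (β : ℝ) (L : Θ → ℝ) (b : ℝ)
  (D : ProbabilityMeasure Θ → ProbabilityMeasure Θ → ℝ) (prior : ProbabilityMeasure Θ)

noncomputable def shiftedObjective (Q : ProbabilityMeasure Θ) : ℝ≥0∞ :=
  n * ∫⁻ θ, ENNReal.ofReal (L θ - b) ∂(Q : Measure Θ) + ENNReal.ofReal (1 / β * D Q prior)

variable {n β L b D prior}

theorem T_eq_shiftedObjective_add (hβ : 0 ≤ β) (hL : Measurable L) (hb₀ : b ≤ 0)
    (hb : ∀ θ, b ≤ L θ) (Q : ProbabilityMeasure Θ) (hD : 0 ≤ D Q prior) :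
    T n β L D prior Q = (shiftedObjective n β L b D prior Q : EReal) + ((n * b : ℝ) : EReal) := by
  have hn : ((n : ℝ≥0∞) : EReal) = (n : ℝ) := by norm_cast
  rw [T, J_eq_lintegral_sub_add hL hb₀ hb,
    EReal.left_distrib_of_nonneg_of_ne_top (by exact_mod_cast n.cast_nonneg) (EReal.coe_ne_top _),
    shiftedObjective, EReal.coe_ennreal_add, EReal.coe_ennreal_mul, EReal.coe_ennreal_ofReal,
    max_eq_left (by positivity), ← EReal.coe_mul, add_right_comm, hn]

variable [TopologicalSpace Θ]

theorem lowerSemicontinuous_shiftedObjective [OpensMeasurableSpace Θ]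
    [TopologicalSpace.PseudoMetrizableSpace Θ] [TopologicalSpace.SeparableSpace Θ] (hβ : 0 ≤ β)
    (hL : LowerSemicontinuous L) (hb : ∀ θ, b ≤ L θ)
    (hD : LowerSemicontinuous fun Q => D Q prior) :
    LowerSemicontinuous (shiftedObjective n β L b D prior) := by
  refine LowerSemicontinuous.add ?_ ?_
  · exact (ENNReal.continuous_const_mul (ENNReal.natCast_ne_top n)).comp_lowerSemicontinuous
      (ProbabilityMeasure.lowerSemicontinuous_lintegral (hL.sub_const b)
        fun θ => sub_nonneg.2 (hb θ))
      fun _ _ h => mul_le_mul_of_nonneg_left h zero_le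
  · exact (ENNReal.continuous_ofReal.comp (continuous_const_mul _)).comp_lowerSemicontinuous hD
      fun _ _ h => ENNReal.ofReal_le_ofReal (mul_le_mul_of_nonneg_left h (by positivity))

theorem isCompact_setOf_shiftedObjective_le [TopologicalSpace.MetrizableSpace Θ]
    [TopologicalSpace.SeparableSpace Θ] [BorelSpace Θ] (hn : 1 ≤ n) (hβ : 0 ≤ β)
    (hL : LowerSemicontinuous L) (hL_coer : Coercive L) (hb : ∀ θ, b ≤ L θ)
    (hD : LowerSemicontinuous fun Q => D Q prior) {c : ℝ≥0∞} (hc : c ≠ ⊤) :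
    IsCompact {Q | shiftedObjective n β L b D prior Q ≤ c} := by
  refine (ProbabilityMeasure.isCompact_setOf_lintegral_le (hL.sub_const b)
    (fun θ => sub_nonneg.2 (hb θ)) (hL_coer.sub_const b) hc).of_isClosed_subset
    ((lowerSemicontinuous_shiftedObjective hβ hL hb hD).isClosed_preimage c) fun Q hQ => ?_
  rw [Set.mem_ofPred_eq, shiftedObjective] at hQ
  exact ((le_mul_of_one_le_left' (by exact_mod_cast hn)).trans le_self_add).trans hQ

end ShiftedObjective

theorem gvi_posterior_exists_general {Θ : Type*} [TopologicalSpace Θ] [PolishSpace Θ] [MeasurableSpace Θ]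
    [BorelSpace Θ]
    (L : Θ → ℝ) (hLbdd : ∃ b : ℝ, ∀ θ, b ≤ L θ)
    (hLlsc : LowerSemicontinuous L) (hLcoer : Coercive L)
    (𝒬 : Set (ProbabilityMeasure Θ)) (h𝒬 : IsClosed 𝒬)
    (D : ProbabilityMeasure Θ → ProbabilityMeasure Θ → ℝ)
    (hDnn : ∀ P Q : ProbabilityMeasure Θ, 0 ≤ D P Q)
    (hDlsc : ∀ P : ProbabilityMeasure Θ, LowerSemicontinuous fun Q => D Q P)
    (Pr : ProbabilityMeasure Θ)
    (β : ℝ) (hβ : 0 < β) (n : ℕ) (hn : 1 ≤ n)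
    (hfin : ∃ Q ∈ 𝒬, T n β L D Pr Q < (⊤ : EReal)) :
    ∃ Qn ∈ 𝒬, ∀ Q ∈ 𝒬, T n β L D Pr Qn ≤ T n β L D Pr Q := by
  obtain ⟨b₀, hb₀⟩ := hLbdd
  have hb : ∀ θ, min b₀ 0 ≤ L θ := fun θ => (min_le_left _ _).trans (hb₀ θ)
  set G := shiftedObjective n β L (min b₀ 0) D Pr
  have hT : ∀ Q, T n β L D Pr Q = (G Q : EReal) + ((n * min b₀ 0 : ℝ) : EReal) := fun Q =>
    T_eq_shiftedObjective_add hβ.le hLlsc.measurable (min_le_right _ _) hb Q (hDnn Q Pr)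
  obtain ⟨Q₀, hQ₀, hT₀⟩ := hfin
  have hG₀ : G Q₀ ≠ ⊤ := by
    intro h
    rw [hT, h, EReal.coe_ennreal_top, EReal.top_add_coe] at hT₀
    exact hT₀.ne rfl
  obtain ⟨P, hP, hmin⟩ := (lowerSemicontinuous_shiftedObjective hβ.le hLlsc hb (hDlsc Pr))
    |>.exists_isMinOn_of_isCompact_sublevel h𝒬 hQ₀
      (isCompact_setOf_shiftedObjective_le hn hβ.le hLlsc hLcoer hb (hDlsc Pr) hG₀)
  refine ⟨P, hP, fun Q hQ => ?_⟩
  rw [hT, hT]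
  exact add_le_add_left (EReal.coe_ennreal_le_coe_ennreal_iff.2 (hmin hQ)) _

/-- Existence of a GVI posterior: under a lower bounded, lsc, coercive loss,
weak*-closed `𝒬`, a divergence lower semicontinuous in its first argument and bounded by `M`
on `𝒬`, an empirical loss minimiser in `𝒬`, and some element of finite objective,
there exists a minimiser of `T_n` over `𝒬`. -/
theorem gvi_posterior_exists {Θ : Type*} [TopologicalSpace Θ] [PolishSpace Θ] [MeasurableSpace Θ]
    [BorelSpace Θ]
    (L : Θ → ℝ) (hLmeas : Measurable L) (hLbdd : ∃ b : ℝ, ∀ θ, b ≤ L θ)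
    (hLlsc : LowerSemicontinuous L) (hLcoer : Coercive L)
    (𝒬 : Set (ProbabilityMeasure Θ)) (h𝒬 : IsClosed 𝒬)
    (D : ProbabilityMeasure Θ → ProbabilityMeasure Θ → ℝ)
    (hDnn : ∀ P Q : ProbabilityMeasure Θ, 0 ≤ D P Q)
    (hDlsc : ∀ P : ProbabilityMeasure Θ, LowerSemicontinuous fun Q => D Q P)
    (Pr : ProbabilityMeasure Θ)
    (M β : ℝ) (hM : 0 < M) (hβ : 0 < β) (n : ℕ) (hn : 1 ≤ n)
    (hDbdd : ∀ Q ∈ 𝒬, D Q Pr ≤ M)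
    (Pstar : ProbabilityMeasure Θ) (hPstar𝒬 : Pstar ∈ 𝒬)
    (hPstar : ∀ Q ∈ 𝒬, J L (Pstar : Measure Θ) ≤ J L (Q : Measure Θ))
    (hfin : ∃ Q ∈ 𝒬, T n β L D Pr Q < (⊤ : EReal)) :
    ∃ Qn ∈ 𝒬, ∀ Q ∈ 𝒬, T n β L D Pr Qn ≤ T n β L D Pr Q :=
  gvi_posterior_exists_general L hLbdd hLlsc hLcoer 𝒬 h𝒬 D hDnn hDlsc Pr β hβ n hn hfin
end

section
/- Let (L_n) be a sequence of measurable, bounded below, lower semicontinuous, coercive functions Θ → ℝ, let L : Θ → ℝ be lower semicontinuous with L_n(θ) → L(θ) for every θ ∈ Θ and inf_Θ L ≥ limsup_n inf_Θ L_n > −∞. For each n let P_n^⋆ ∈ 𝒫(Θ) be a minimiser of J_{L_n} over 𝒫(Θ). If A ⊆ Θ is measurable with inf_A L > inf_Θ L and liminf_n inf_A L_n > inf_Θ L, then P_n^⋆(A) → 0 as n → ∞ (indeed P_n^⋆(A) = 0 for all n sufficiently large). -/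
/-!
Comparing a minimiser `P` of `J_f` with the Dirac masses gives `∫ f dP ≤ inf_Θ f`, so `f = inf_Θ f`
holds `P`-almost surely and `P` charges no set `A` with `inf_Θ f < inf_A f`. By the `limsup` and
`liminf` hypotheses there is a real `c` with `inf_Θ L_n < c < inf_A L_n` for all large `n`, and
then `P_n^⋆(A) = 0`.
-/

open MeasureTheory Filter Topology
open scoped ENNReal NNReal

section Minimiser

variable {Θ : Type*} [MeasurableSpace Θ] {μ : Measure Θ} {f : Θ → ℝ}

lemma J_diracProb (hf : Measurable f) (θ : Θ) : J f (diracProb θ : Measure Θ) = f θ := by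
  change J f (Measure.dirac θ) = f θ
  rw [J, lintegral_dirac' θ hf.ennreal_ofReal,
    lintegral_dirac' θ (f := fun x => ENNReal.ofReal (-f x)) hf.neg.ennreal_ofReal,
    EReal.coe_ennreal_ofReal, EReal.coe_ennreal_ofReal, ← EReal.coe_sub,
    max_zero_sub_max_neg_zero_eq_self]

lemma J_eq_integral (hf : Integrable f μ) : J f μ = ∫ θ, f θ ∂μ := by
  have hneg : ∫⁻ θ, ENNReal.ofReal (-f θ) ∂μ ≠ ⊤ := hf.neg.lintegral_lt_top.ne
  rw [integral_eq_lintegral_pos_part_sub_lintegral_neg_part hf, EReal.coe_sub,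
    EReal.coe_ennreal_toReal hf.lintegral_lt_top.ne, EReal.coe_ennreal_toReal hneg, J]

lemma integrable_of_J_ne_top [IsFiniteMeasure μ] {b : ℝ} (hf : AEStronglyMeasurable f μ)
    (hb : ∀ᵐ θ ∂μ, b ≤ f θ) (hJ : J f μ ≠ ⊤) : Integrable f μ := by
  have hneg : ∫⁻ θ, ENNReal.ofReal (-f θ) ∂μ < ⊤ :=
    calc ∫⁻ θ, ENNReal.ofReal (-f θ) ∂μ ≤ ∫⁻ _, ENNReal.ofReal (-b) ∂μ :=
          lintegral_mono_ae (hb.mono fun θ hθ => ENNReal.ofReal_le_ofReal (neg_le_neg hθ))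
      _ < ⊤ := by simp [lintegral_const, ENNReal.mul_lt_top]
  have hpos : ∫⁻ θ, ENNReal.ofReal (f θ) ∂μ < ⊤ := by
    refine lt_top_iff_ne_top.2 fun htop => hJ ?_
    rw [J, htop, EReal.coe_ennreal_top, ← EReal.coe_ennreal_toReal hneg.ne, EReal.top_sub_coe]
  refine ⟨hf, (hasFiniteIntegral_iff_norm f).2 ?_⟩
  calc ∫⁻ θ, ENNReal.ofReal ‖f θ‖ ∂μ
      ≤ ∫⁻ θ, (ENNReal.ofReal (f θ) + ENNReal.ofReal (-f θ)) ∂μ :=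
        lintegral_mono fun θ => by
          rw [Real.norm_eq_abs, abs_eq_max_neg]
          exact ENNReal.ofReal_max _ _ ▸ max_le le_self_add le_add_self
    _ = (∫⁻ θ, ENNReal.ofReal (f θ) ∂μ) + ∫⁻ θ, ENNReal.ofReal (-f θ) ∂μ :=
        lintegral_add_left' hf.aemeasurable.ennreal_ofReal _
    _ < ⊤ := ENNReal.add_lt_top.2 ⟨hpos, hneg⟩

lemma ae_eq_iInf_of_integral_le_iInf [IsProbabilityMeasure μ] (hf : Integrable f μ)
    (hb : BddBelow (Set.range f)) (h : ∫ θ, f θ ∂μ ≤ ⨅ θ, f θ) :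
    ∀ᵐ θ ∂μ, f θ = ⨅ θ, f θ := by
  set m := ⨅ θ, f θ
  have hgap_nonneg : 0 ≤ fun θ => f θ - m := fun θ => sub_nonneg.2 (ciInf_le hb θ)
  have hgap_int : Integrable (fun θ => f θ - m) μ := hf.sub (integrable_const m)
  have hgap_zero : ∫ θ, (f θ - m) ∂μ = 0 := by
    refine le_antisymm ?_ (integral_nonneg hgap_nonneg)
    rw [integral_sub hf (integrable_const m), integral_const, probReal_univ, one_smul]
    linarith
  filter_upwards [(integral_eq_zero_iff_of_nonneg hgap_nonneg hgap_int).1 hgap_zero] with θ hθ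
  exact sub_eq_zero.1 hθ

lemma ae_eq_iInf_of_forall_J_le [IsProbabilityMeasure μ] (hf : Measurable f)
    (hb : BddBelow (Set.range f)) (hmin : ∀ θ, J f μ ≤ f θ) :
    ∀ᵐ θ ∂μ, f θ = ⨅ θ, f θ := by
  obtain ⟨b, hb_le⟩ := hb
  have hΘ : Nonempty Θ := nonempty_of_isProbabilityMeasure μ
  have hint : Integrable f μ :=
    integrable_of_J_ne_top hf.aestronglyMeasurable (ae_of_all _ fun θ => hb_le ⟨θ, rfl⟩)
      (ne_top_of_le_ne_top (EReal.coe_ne_top _) (hmin hΘ.some))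
  refine ae_eq_iInf_of_integral_le_iInf hint ⟨b, hb_le⟩ (le_ciInf fun θ => ?_)
  exact_mod_cast (J_eq_integral hint ▸ hmin θ)

lemma measure_eq_zero_of_iInf_lt_iInf (hae : ∀ᵐ θ ∂μ, f θ = ⨅ θ, f θ)
    (hb : BddBelow (Set.range f)) {A : Set Θ} (hA : ⨅ θ, f θ < ⨅ θ : A, f θ) : μ A = 0 := by
  refine measure_eq_zero_iff_ae_notMem.2 ?_
  filter_upwards [hae] with θ hθ hθA
  have : ⨅ θ : A, f θ ≤ f θ :=
    ciInf_le (hb.mono (Set.range_comp_subset_range ((↑) : A → Θ) f)) ⟨θ, hθA⟩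
  linarith

end Minimiser

theorem empirical_minimisers_concentrate_general {Θ : Type*} [MeasurableSpace Θ]
    (L : ℕ → Θ → ℝ) (Llim : Θ → ℝ)
    (hmeas : ∀ n, Measurable (L n)) (hbdd : ∀ n, ∃ b : ℝ, ∀ θ, b ≤ L n θ)
    (hinf1 : Filter.limsup (fun n => ((⨅ θ : Θ, L n θ : ℝ) : EReal)) atTop ≤
      ((⨅ θ : Θ, Llim θ : ℝ) : EReal))
    (Pstar : ℕ → ProbabilityMeasure Θ)
    (hPstar : ∀ n, ∀ μ : ProbabilityMeasure Θ,
      J (L n) (Pstar n : Measure Θ) ≤ J (L n) (μ : Measure Θ))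
    (A : Set Θ)
    (hAliminf : ((⨅ θ : Θ, Llim θ : ℝ) : EReal) <
      Filter.liminf (fun n => ((⨅ θ : A, L n (θ : Θ) : ℝ) : EReal)) atTop) :
    Tendsto (fun n => ((Pstar n) A : ℝ)) atTop (nhds 0) ∧
      ∀ᶠ n in atTop, (Pstar n) A = 0 := by
  have hev : ∀ᶠ n in atTop, (Pstar n) A = 0 := by
    obtain ⟨c, hc, hcA⟩ := EReal.exists_between_coe_real hAliminf
    filter_upwards [eventually_lt_of_limsup_lt (hinf1.trans_lt hc),
      eventually_lt_of_lt_liminf hcA] with n hn hnA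
    obtain ⟨b, hb⟩ := hbdd n
    have hbdd_below : BddBelow (Set.range (L n)) := ⟨b, Set.forall_mem_range.2 hb⟩
    have hmin : ∀ θ, J (L n) (Pstar n : Measure Θ) ≤ L n θ := fun θ =>
      (hPstar n (diracProb θ)).trans_eq (J_diracProb (hmeas n) θ)
    have hgap : ⨅ θ, L n θ < ⨅ θ : A, L n θ := by exact_mod_cast hn.trans hnA
    have := measure_eq_zero_of_iInf_lt_iInf
      (ae_eq_iInf_of_forall_J_le (hmeas n) hbdd_below hmin) hbdd_below hgap
    exact (ProbabilityMeasure.null_iff_toMeasure_null _ _).2 this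
  exact ⟨tendsto_const_nhds.congr' (hev.mono fun n hn => by simp [hn]), hev⟩

/-- If the losses `L n` converge pointwise to a lsc limit `L∞` with
`inf_Θ L∞ ≥ limsup_n inf_Θ L_n > −∞`, and `P⋆ n` minimises `J_{L_n}` over `𝒫(Θ)`, then for any
measurable `A` with `inf_A L∞ > inf_Θ L∞` and `liminf_n inf_A L_n > inf_Θ L∞`, one has
`P⋆ n (A) → 0`, and indeed `P⋆ n (A) = 0` for all `n` large enough. -/
theorem empirical_minimisers_concentrate {Θ : Type*} [TopologicalSpace Θ] [PolishSpace Θ]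
    [MeasurableSpace Θ] [BorelSpace Θ] [Nonempty Θ]
    (L : ℕ → Θ → ℝ) (Llim : Θ → ℝ)
    (hmeas : ∀ n, Measurable (L n)) (hbdd : ∀ n, ∃ b : ℝ, ∀ θ, b ≤ L n θ)
    (hlsc : ∀ n, LowerSemicontinuous (L n)) (hcoer : ∀ n, Coercive (L n))
    (hLlimlsc : LowerSemicontinuous Llim)
    (hconv : ∀ θ : Θ, Tendsto (fun n => L n θ) atTop (nhds (Llim θ)))
    (hinf1 : Filter.limsup (fun n => ((⨅ θ : Θ, L n θ : ℝ) : EReal)) atTop ≤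
      ((⨅ θ : Θ, Llim θ : ℝ) : EReal))
    (hinf2 : (⊥ : EReal) < Filter.limsup (fun n => ((⨅ θ : Θ, L n θ : ℝ) : EReal)) atTop)
    (Pstar : ℕ → ProbabilityMeasure Θ)
    (hPstar : ∀ n, ∀ μ : ProbabilityMeasure Θ,
      J (L n) (Pstar n : Measure Θ) ≤ J (L n) (μ : Measure Θ))
    (A : Set Θ) (hA : MeasurableSet A)
    (hAinf : (⨅ θ : Θ, Llim θ) < ⨅ θ : A, Llim (θ : Θ))
    (hAliminf : ((⨅ θ : Θ, Llim θ : ℝ) : EReal) <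
      Filter.liminf (fun n => ((⨅ θ : A, L n (θ : Θ) : ℝ) : EReal)) atTop) :
    Tendsto (fun n => ((Pstar n) A : ℝ)) atTop (nhds 0) ∧
      ∀ᶠ n in atTop, (Pstar n) A = 0 :=
  empirical_minimisers_concentrate_general L Llim hmeas hbdd hinf1 Pstar hPstar A hAliminf
end

section
/- Suppose 𝒬 allows for Dirac measures, D(Q,Π) ≤ M for all Q ∈ 𝒬, and the losses (L_n) are measurable, bounded below, lower semicontinuous and coercive with L_n → L pointwise, L lower semicontinuous, inf_Θ L ≥ limsup_n inf_Θ L_n > −∞. For each n let Q_n minimise T_n(Q) = n·J_{L_n}(Q) + (1/β)·D(Q,Π) over 𝒬. Let (ε_n) be a positive sequence with ε_n → 0 and n·ε_n → ∞, and set N_{ε_n} := {θ ∈ Θ : L(θ) ≤ inf_Θ L + ε_n}. If there exist k > 0 and N such that inf_{N_{ε_n}^c} L_n − inf_Θ L_n ≥ k·ε_n for all n ≥ N, then Q_n(N_{ε_n}) → 1 as n → ∞. -/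
open MeasureTheory Filter Topology
open scoped ENNReal NNReal

/-! Since `𝒬` allows Dirac measures, for every `δ > 0` some competitor in `𝒬` has objective at
most `n (inf L_n + δ) + M / β`. On the other hand the gap condition gives
`J_{L_n}(Q_n) ≥ inf L_n + k ε_n Q_n(N_{ε_n}ᶜ)`, and `D ≥ 0`. Comparing the two for the minimiser
yields `n k ε_n Q_n(N_{ε_n}ᶜ) ≤ M / β`, which tends to `0` because `n ε_n → ∞`. -/

section GVI

variable {Θ : Type*} [MeasurableSpace Θ] {n : ℕ} {β : ℝ} {f : Θ → ℝ}
  {D : ProbabilityMeasure Θ → ProbabilityMeasure Θ → ℝ} {Pr Q : ProbabilityMeasure Θ}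

theorem integral_le_J {g : Θ → ℝ} {μ : Measure Θ} (hg : Integrable g μ)
    (hgf : ∀ θ, g θ ≤ f θ) : ((∫ θ, g θ ∂μ : ℝ) : EReal) ≤ J f μ := by
  have hpos : ∫⁻ θ, ENNReal.ofReal (g θ) ∂μ ≠ ∞ :=
    (lintegral_ofReal_le_lintegral_enorm g).trans_lt hg.hasFiniteIntegral |>.ne
  have hneg : ∫⁻ θ, ENNReal.ofReal (-g θ) ∂μ ≠ ∞ :=
    (lintegral_ofReal_le_lintegral_enorm (-g)).trans_lt hg.neg.hasFiniteIntegral |>.ne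
  rw [integral_eq_lintegral_pos_part_sub_lintegral_neg_part hg, EReal.coe_sub,
    EReal.coe_ennreal_toReal hpos, EReal.coe_ennreal_toReal hneg]
  exact EReal.sub_le_sub
    (EReal.coe_ennreal_le_coe_ennreal_iff.2 <| lintegral_mono fun θ ↦
      ENNReal.ofReal_le_ofReal (hgf θ))
    (EReal.coe_ennreal_le_coe_ennreal_iff.2 <| lintegral_mono fun θ ↦
      ENNReal.ofReal_le_ofReal (neg_le_neg (hgf θ)))

theorem le_J_of_gap (Q : ProbabilityMeasure Θ) {s : Set Θ} (hs : MeasurableSet s)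
    {m c : ℝ} (hm : ∀ θ, m ≤ f θ) (hc : ∀ θ ∉ s, m + c ≤ f θ) :
    ((m + c * (1 - Q s) : ℝ) : EReal) ≤ J f Q := by
  have hg_int : Integrable (fun θ ↦ m + sᶜ.indicator (fun _ ↦ c) θ) (Q : Measure Θ) :=
    (integrable_const m).add ((integrable_const c).indicator hs.compl)
  have hg_integral : ∫ θ, m + sᶜ.indicator (fun _ ↦ c) θ ∂(Q : Measure Θ) =
      m + c * (1 - Q s) := by
    rw [integral_add (integrable_const m) ((integrable_const c).indicator hs.compl),
      integral_const, integral_indicator_const c hs.compl, probReal_compl_eq_one_sub hs]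
    simp [mul_comm]
  rw [← hg_integral]
  refine integral_le_J hg_int fun θ ↦ ?_
  by_cases hθ : θ ∈ s
  · simpa [hθ] using hm θ
  · simpa [hθ] using hc θ hθ

theorem mul_J_le_T (hβ : 0 < β) (hD : 0 ≤ D Q Pr) : (n : EReal) * J f Q ≤ T n β f D Pr Q :=
  le_add_of_nonneg_right <| EReal.coe_nonneg.2 <| mul_nonneg (by positivity) hD

theorem T_le_of_J_le (hβ : 0 < β) {y M : ℝ} (hJ : J f Q ≤ y) (hD : D Q Pr ≤ M) :
    T n β f D Pr Q ≤ ((n * y + M / β : ℝ) : EReal) := by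
  rw [EReal.coe_add, EReal.coe_mul, div_eq_inv_mul, ← one_div]
  exact add_le_add (mul_le_mul_of_nonneg_left hJ (EReal.coe_nonneg.2 n.cast_nonneg))
    (EReal.coe_le_coe_iff.2 (mul_le_mul_of_nonneg_left hD (by positivity)))

theorem mul_le_of_minimizes_T (hβ : 0 < β) {𝒬 : Set (ProbabilityMeasure Θ)} {m M x : ℝ}
    (hinf : ⨅ ν : 𝒬, J f ν = (m : EReal)) (hD : 0 ≤ D Q Pr) (hDbdd : ∀ ν ∈ 𝒬, D ν Pr ≤ M)
    (hmin : ∀ ν ∈ 𝒬, T n β f D Pr Q ≤ T n β f D Pr ν) (hx : (x : EReal) ≤ J f Q) :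
    n * x ≤ n * m + M / β := by
  have hδ : ∀ δ > 0, n * x ≤ n * (m + δ) + M / β := by
    intro δ hδ
    obtain ⟨ν, hν⟩ : ∃ ν : 𝒬, J f ν < ((m + δ : ℝ) : EReal) :=
      iInf_lt_iff.1 (by rw [hinf]; exact_mod_cast lt_add_of_pos_right m hδ)
    suffices ((n * x : ℝ) : EReal) ≤ ((n * (m + δ) + M / β : ℝ) : EReal) by exact_mod_cast this
    calc ((n * x : ℝ) : EReal) = (n : EReal) * x := EReal.coe_mul _ _
      _ ≤ n * J f Q := mul_le_mul_of_nonneg_left hx (EReal.coe_nonneg.2 n.cast_nonneg)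
      _ ≤ T n β f D Pr Q := mul_J_le_T hβ hD
      _ ≤ T n β f D Pr ν := hmin ν ν.2
      _ ≤ _ := T_le_of_J_le hβ hν.le (hDbdd ν ν.2)
  have hlim : Tendsto (fun δ : ℝ ↦ n * (m + δ) + M / β) (𝓝[>] 0) (𝓝 (n * m + M / β)) :=
    tendsto_nhdsWithin_of_tendsto_nhds (Continuous.tendsto' (by fun_prop) 0 _ (by simp))
  exact ge_of_tendsto hlim (eventually_nhdsWithin_of_forall hδ)

theorem mul_mass_compl_le_of_minimizes_T [TopologicalSpace Θ] [OpensMeasurableSpace Θ]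
    {𝒬 : Set (ProbabilityMeasure Θ)} (h𝒬 : AllowsDiracs 𝒬) (hbdd : ∃ b, ∀ θ, b ≤ f θ)
    (hlsc : LowerSemicontinuous f) (hcoer : Coercive f) (hβ : 0 < β) {M : ℝ}
    (hD : 0 ≤ D Q Pr) (hDbdd : ∀ ν ∈ 𝒬, D ν Pr ≤ M)
    (hmin : ∀ ν ∈ 𝒬, T n β f D Pr Q ≤ T n β f D Pr ν) {s : Set Θ} (hs : MeasurableSet s)
    {c : ℝ} (hgap : c ≤ (⨅ θ : (sᶜ : Set Θ), f θ) - ⨅ θ, f θ) :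
    n * c * (1 - Q s) ≤ M / β := by
  obtain ⟨b, hb⟩ := hbdd
  have hm : ∀ θ, ⨅ θ', f θ' ≤ f θ := ciInf_le ⟨b, by rintro _ ⟨θ, rfl⟩; exact hb θ⟩
  have hc : ∀ θ ∉ s, (⨅ θ', f θ') + c ≤ f θ := fun θ hθ ↦ by
    linarith [ciInf_le (f := fun θ : (sᶜ : Set Θ) ↦ f θ)
      ⟨b, by rintro _ ⟨θ, rfl⟩; exact hb θ⟩ ⟨θ, hθ⟩]
  have := mul_le_of_minimizes_T hβ (h𝒬.2 f ⟨b, hb⟩ hlsc hcoer) hD hDbdd hmin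
    (le_J_of_gap Q hs hm hc)
  linarith

end GVI

theorem gvi_rates_of_convergence_general {Θ : Type*} [TopologicalSpace Θ]
    [MeasurableSpace Θ] [BorelSpace Θ]
    (𝒬 : Set (ProbabilityMeasure Θ)) (h𝒬 : AllowsDiracs 𝒬)
    (L : ℕ → Θ → ℝ) (Llim : Θ → ℝ)
    (hbdd : ∀ n, ∃ b : ℝ, ∀ θ, b ≤ L n θ)
    (hlsc : ∀ n, LowerSemicontinuous (L n)) (hcoer : ∀ n, Coercive (L n))
    (hLlimlsc : LowerSemicontinuous Llim)
    (D : ProbabilityMeasure Θ → ProbabilityMeasure Θ → ℝ)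
    (hDnn : ∀ P Q : ProbabilityMeasure Θ, 0 ≤ D P Q)
    (Pr : ProbabilityMeasure Θ) (M β : ℝ) (hβ : 0 < β)
    (hDbdd : ∀ Q ∈ 𝒬, D Q Pr ≤ M)
    (Qn : ℕ → ProbabilityMeasure Θ)
    (hQn : ∀ n, Qn n ∈ 𝒬 ∧ ∀ Q ∈ 𝒬, T n β (L n) D Pr (Qn n) ≤ T n β (L n) D Pr Q)
    (ε : ℕ → ℝ)
    (hnε : Tendsto (fun n : ℕ => (n : ℝ) * ε n) atTop atTop)
    (hgap : ∃ k : ℝ, 0 < k ∧ ∃ N : ℕ, ∀ n ≥ N,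
      k * ε n ≤ (⨅ θ : ({θ : Θ | Llim θ ≤ (⨅ θ' : Θ, Llim θ') + ε n}ᶜ : Set Θ), L n (θ : Θ)) -
        ⨅ θ : Θ, L n θ) :
    Tendsto (fun n => ((Qn n) {θ : Θ | Llim θ ≤ (⨅ θ' : Θ, Llim θ') + ε n} : ℝ)) atTop
      (nhds 1) := by
  obtain ⟨k, hk, N, hgap⟩ := hgap
  set A : ℕ → Set Θ := fun n ↦ {θ : Θ | Llim θ ≤ (⨅ θ' : Θ, Llim θ') + ε n}
  have hmass : ∀ n ≥ N, n * (k * ε n) * (1 - Qn n (A n)) ≤ M / β := fun n hn ↦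
    mul_mass_compl_le_of_minimizes_T h𝒬 (hbdd n) (hlsc n) (hcoer n) hβ (hDnn _ _) hDbdd
      (hQn n).2 (measurableSet_le hLlimlsc.measurable measurable_const) (hgap n hn)
  have hdefect : Tendsto (fun n ↦ 1 - (Qn n (A n) : ℝ)) atTop (𝓝 0) := by
    refine tendsto_of_tendsto_of_tendsto_of_le_of_le' tendsto_const_nhds
      ((tendsto_const_nhds (x := M / β / k)).div_atTop hnε) (Eventually.of_forall fun n ↦ ?_) ?_
    · simp
    filter_upwards [eventually_ge_atTop N, hnε.eventually_gt_atTop 0] with n hN hpos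
    rw [le_div_iff₀ hpos, le_div_iff₀ hk]
    linarith [hmass n hN]
  simpa using hdefect.const_sub 1

/-- Theorem: rates of convergence: With `𝒬` allowing Dirac measures, a bounded
divergence, and a positive sequence `ε_n → 0` with `n·ε_n → ∞`, if eventually
`inf_{N_{ε_n}^c} L_n − inf_Θ L_n ≥ k·ε_n`, then `Q_n(N_{ε_n}) → 1`. -/
theorem gvi_rates_of_convergence {Θ : Type*} [TopologicalSpace Θ] [PolishSpace Θ]
    [MeasurableSpace Θ] [BorelSpace Θ] [Nonempty Θ]
    (𝒬 : Set (ProbabilityMeasure Θ)) (h𝒬 : AllowsDiracs 𝒬)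
    (L : ℕ → Θ → ℝ) (Llim : Θ → ℝ)
    (hmeas : ∀ n, Measurable (L n)) (hbdd : ∀ n, ∃ b : ℝ, ∀ θ, b ≤ L n θ)
    (hlsc : ∀ n, LowerSemicontinuous (L n)) (hcoer : ∀ n, Coercive (L n))
    (hLlimlsc : LowerSemicontinuous Llim)
    (hconv : ∀ θ : Θ, Tendsto (fun n => L n θ) atTop (nhds (Llim θ)))
    (hinf1 : Filter.limsup (fun n => ((⨅ θ : Θ, L n θ : ℝ) : EReal)) atTop ≤
      ((⨅ θ : Θ, Llim θ : ℝ) : EReal))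
    (hinf2 : (⊥ : EReal) < Filter.limsup (fun n => ((⨅ θ : Θ, L n θ : ℝ) : EReal)) atTop)
    (D : ProbabilityMeasure Θ → ProbabilityMeasure Θ → ℝ)
    (hDnn : ∀ P Q : ProbabilityMeasure Θ, 0 ≤ D P Q)
    (Pr : ProbabilityMeasure Θ) (M β : ℝ) (hM : 0 < M) (hβ : 0 < β)
    (hDbdd : ∀ Q ∈ 𝒬, D Q Pr ≤ M)
    (Qn : ℕ → ProbabilityMeasure Θ)
    (hQn : ∀ n, Qn n ∈ 𝒬 ∧ ∀ Q ∈ 𝒬, T n β (L n) D Pr (Qn n) ≤ T n β (L n) D Pr Q)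
    (ε : ℕ → ℝ) (hεpos : ∀ n, 0 < ε n) (hε0 : Tendsto ε atTop (nhds 0))
    (hnε : Tendsto (fun n : ℕ => (n : ℝ) * ε n) atTop atTop)
    (hgap : ∃ k : ℝ, 0 < k ∧ ∃ N : ℕ, ∀ n ≥ N,
      k * ε n ≤ (⨅ θ : ({θ : Θ | Llim θ ≤ (⨅ θ' : Θ, Llim θ') + ε n}ᶜ : Set Θ), L n (θ : Θ)) -
        ⨅ θ : Θ, L n θ) :
    Tendsto (fun n => ((Qn n) {θ : Θ | Llim θ ≤ (⨅ θ' : Θ, Llim θ') + ε n} : ℝ)) atTop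
      (nhds 1) :=
  gvi_rates_of_convergence_general 𝒬 h𝒬 L Llim hbdd hlsc hcoer hLlimlsc D hDnn Pr M β hβ hDbdd Qn
    hQn ε hnε hgap
end

section
/- Suppose the losses (L_n) are measurable, bounded below, lower semicontinuous and coercive with L_n → L pointwise, L lower semicontinuous, inf_Θ L ≥ limsup_n inf_Θ L_n > −∞; D is lower semicontinuous in its first argument (not assumed bounded); 𝒬 is closed in the weak* topology; and some Q ∈ 𝒬 has T_n(Q) < ∞ for each n. Suppose there exists a sequence (ν_n) ⊆ 𝒬 with (i) J_{L_n}(ν_n) − inf_Θ L_n → 0 and (ii) n^{−1}·D(ν_n,Π) → 0. Let Q_n minimise T_n(Q) = n·J_{L_n}(Q) + (1/β)·D(Q,Π) over 𝒬. Then for every measurable A ⊆ Θ with inf_A L > inf_Θ L and liminf_n inf_A L_n > inf_Θ L, one has Q_n(A) → 0 as n → ∞. -/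
open MeasureTheory Filter Topology
open scoped ENNReal NNReal

lemma ennreal_coe_ereal_toReal (x : ℝ≥0∞) (h : x ≠ ⊤) :
    (x : EReal) = ((x.toReal : ℝ) : EReal) := by
  conv_lhs => rw [← ENNReal.ofReal_toReal h]
  rw [EReal.coe_ennreal_ofReal, max_eq_left ENNReal.toReal_nonneg]

lemma max_sub_max_neg (x : ℝ) : max x 0 - max (-x) 0 = x := by
  rcases le_total x 0 with h | h
  · rw [max_eq_right h, max_eq_left (by linarith), zero_sub, neg_neg]
  · rw [max_eq_left h, max_eq_right (by linarith), sub_zero]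

lemma J_lower_bound {Θ : Type*} [MeasurableSpace Θ] (μ : Measure Θ) [IsProbabilityMeasure μ]
    (f : Θ → ℝ) (A : Set Θ) (hA : MeasurableSet A) (a m : ℝ)
    (hm : ∀ θ, m ≤ f θ) (ha : ∀ θ ∈ A, a ≤ f θ) :
    (((μ A).toReal * a + (1 - (μ A).toReal) * m : ℝ) : EReal) ≤ J f μ := by
  classical
  have hAc : MeasurableSet Aᶜ := hA.compl
  have key : ∀ c d : ℝ,
      ∫⁻ θ, (A.indicator (fun _ => ENNReal.ofReal c) θ
        + Aᶜ.indicator (fun _ => ENNReal.ofReal d) θ) ∂μ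
      = ENNReal.ofReal c * μ A + ENNReal.ofReal d * μ Aᶜ := by
    intro c d
    rw [lintegral_add_left ((measurable_const).indicator hA),
      lintegral_indicator hA, lintegral_indicator hAc,
      setLIntegral_const, setLIntegral_const]
  have h1 : ENNReal.ofReal a * μ A + ENNReal.ofReal m * μ Aᶜ
      ≤ ∫⁻ θ, ENNReal.ofReal (f θ) ∂μ := by
    rw [← key a m]
    refine lintegral_mono fun θ => ?_
    by_cases hθ : θ ∈ A
    · simp only [Set.indicator_apply, Set.mem_compl_iff, hθ, if_true, not_true, if_false, add_zero]
      exact ENNReal.ofReal_le_ofReal (ha θ hθ)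
    · simp only [Set.indicator_apply, Set.mem_compl_iff, hθ, if_false, not_false_iff, if_true,
        zero_add]
      exact ENNReal.ofReal_le_ofReal (hm θ)
  have h2 : ∫⁻ θ, ENNReal.ofReal (-f θ) ∂μ
      ≤ ENNReal.ofReal (-a) * μ A + ENNReal.ofReal (-m) * μ Aᶜ := by
    rw [← key (-a) (-m)]
    refine lintegral_mono fun θ => ?_
    by_cases hθ : θ ∈ A
    · simp only [Set.indicator_apply, Set.mem_compl_iff, hθ, if_true, not_true, if_false, add_zero]
      exact ENNReal.ofReal_le_ofReal (by linarith [ha θ hθ])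
    · simp only [Set.indicator_apply, Set.mem_compl_iff, hθ, if_false, not_false_iff, if_true,
        zero_add]
      exact ENNReal.ofReal_le_ofReal (by linarith [hm θ])
  have hstep : (((ENNReal.ofReal a * μ A + ENNReal.ofReal m * μ Aᶜ : ℝ≥0∞)) : EReal)
      - ((ENNReal.ofReal (-a) * μ A + ENNReal.ofReal (-m) * μ Aᶜ : ℝ≥0∞) : EReal) ≤ J f μ :=
    EReal.sub_le_sub (EReal.coe_ennreal_le_coe_ennreal_iff.2 h1)
      (EReal.coe_ennreal_le_coe_ennreal_iff.2 h2)
  refine le_trans (le_of_eq ?_) hstep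
  have hne1 : (ENNReal.ofReal a * μ A + ENNReal.ofReal m * μ Aᶜ : ℝ≥0∞) ≠ ⊤ := by finiteness
  have hne2 : (ENNReal.ofReal (-a) * μ A + ENNReal.ofReal (-m) * μ Aᶜ : ℝ≥0∞) ≠ ⊤ := by finiteness
  rw [ennreal_coe_ereal_toReal _ hne1, ennreal_coe_ereal_toReal _ hne2, ← EReal.coe_sub,
    EReal.coe_eq_coe_iff]
  have hq : (μ Aᶜ).toReal = 1 - (μ A).toReal := by
    rw [measure_compl hA (measure_ne_top μ A), measure_univ,
      ENNReal.toReal_sub_of_le prob_le_one ENNReal.one_ne_top, ENNReal.toReal_one]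
  rw [ENNReal.toReal_add (by finiteness) (by finiteness),
    ENNReal.toReal_add (by finiteness) (by finiteness),
    ENNReal.toReal_mul, ENNReal.toReal_mul, ENNReal.toReal_mul, ENNReal.toReal_mul,
    ENNReal.toReal_ofReal', ENNReal.toReal_ofReal', ENNReal.toReal_ofReal',
    ENNReal.toReal_ofReal', hq]
  set p := (μ A).toReal
  have Ha := max_sub_max_neg a
  have Hm := max_sub_max_neg m
  linear_combination (-p) * Ha + (p - 1) * Hm


lemma J_const_lower_bound {Θ : Type*} [MeasurableSpace Θ] (μ : Measure Θ)
    [IsProbabilityMeasure μ] (f : Θ → ℝ) (m : ℝ) (hm : ∀ θ, m ≤ f θ) :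
    ((m : ℝ) : EReal) ≤ J f μ := by
  simpa using J_lower_bound μ f ∅ MeasurableSet.empty 0 m hm (by simp)

/-- concentration under arbitrary divergences: if there is a sequence
`ν_n ∈ 𝒬` with `J_{L_n}(ν_n) − inf_Θ L_n → 0` and `D(ν_n, Π)/n → 0`, then the GVI posteriors
`Q_n` satisfy `Q_n(A) → 0` for every measurable `A` with `inf_A L∞ > inf_Θ L∞` and
`liminf_n inf_A L_n > inf_Θ L∞`. -/
theorem gvi_concentration_unbounded_divergence {Θ : Type*} [TopologicalSpace Θ] [PolishSpace Θ]
    [MeasurableSpace Θ] [BorelSpace Θ] [Nonempty Θ]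
    (L : ℕ → Θ → ℝ) (Llim : Θ → ℝ)
    (hmeas : ∀ n, Measurable (L n)) (hbdd : ∀ n, ∃ b : ℝ, ∀ θ, b ≤ L n θ)
    (hlsc : ∀ n, LowerSemicontinuous (L n)) (hcoer : ∀ n, Coercive (L n))
    (hLlimlsc : LowerSemicontinuous Llim)
    (hconv : ∀ θ : Θ, Tendsto (fun n => L n θ) atTop (nhds (Llim θ)))
    (hinf1 : Filter.limsup (fun n => ((⨅ θ : Θ, L n θ : ℝ) : EReal)) atTop ≤
      ((⨅ θ : Θ, Llim θ : ℝ) : EReal))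
    (hinf2 : (⊥ : EReal) < Filter.limsup (fun n => ((⨅ θ : Θ, L n θ : ℝ) : EReal)) atTop)
    (𝒬 : Set (ProbabilityMeasure Θ)) (h𝒬 : IsClosed 𝒬)
    (D : ProbabilityMeasure Θ → ProbabilityMeasure Θ → ℝ)
    (hDnn : ∀ P Q : ProbabilityMeasure Θ, 0 ≤ D P Q)
    (hDlsc : ∀ P : ProbabilityMeasure Θ, LowerSemicontinuous fun Q => D Q P)
    (Pr : ProbabilityMeasure Θ) (β : ℝ) (hβ : 0 < β)
    (hfin : ∀ n : ℕ, ∃ Q ∈ 𝒬, T n β (L n) D Pr Q < (⊤ : EReal))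
    (νn : ℕ → ProbabilityMeasure Θ) (hνn𝒬 : ∀ n, νn n ∈ 𝒬)
    (hνnJ : Tendsto (fun n => J (L n) (νn n : Measure Θ) - ((⨅ θ : Θ, L n θ : ℝ) : EReal))
      atTop (nhds (0 : EReal)))
    (hνnD : Tendsto (fun n : ℕ => D (νn n) Pr / n) atTop (nhds 0))
    (Qn : ℕ → ProbabilityMeasure Θ)
    (hQn : ∀ n, Qn n ∈ 𝒬 ∧ ∀ Q ∈ 𝒬, T n β (L n) D Pr (Qn n) ≤ T n β (L n) D Pr Q)
    (A : Set Θ) (hA : MeasurableSet A)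
    (hAinf : (⨅ θ : Θ, Llim θ) < ⨅ θ : A, Llim (θ : Θ))
    (hAliminf : ((⨅ θ : Θ, Llim θ : ℝ) : EReal) <
      Filter.liminf (fun n => ((⨅ θ : A, L n (θ : Θ) : ℝ) : EReal)) atTop) :
    Tendsto (fun n => ((Qn n) A : ℝ)) atTop (nhds 0) := by
  set m : ℕ → ℝ := fun n => ⨅ θ : Θ, L n θ with hm_def
  set a : ℕ → ℝ := fun n => ⨅ θ : A, L n (θ : Θ) with ha_def
  set infL : ℝ := ⨅ θ : Θ, Llim θ with hinfL_def
  have hmle : ∀ n θ, m n ≤ L n θ := by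
    intro n θ
    obtain ⟨b, hb⟩ := hbdd n
    exact ciInf_le ⟨b, by rintro x ⟨θ', rfl⟩; exact hb θ'⟩ θ
  have hale : ∀ n, ∀ θ ∈ A, a n ≤ L n θ := by
    intro n θ hθ
    obtain ⟨b, hb⟩ := hbdd n
    exact ciInf_le ⟨b, by rintro x ⟨θ', rfl⟩; exact hb θ'⟩ (⟨θ, hθ⟩ : A)
  -- choose the gap δ
  obtain ⟨z, hz1, hz2⟩ := exists_between hAliminf
  have hztop : z ≠ ⊤ := (hz2.trans_le le_top).ne
  have hzbot : z ≠ ⊥ := ((bot_lt_iff_ne_bot.2 (EReal.coe_ne_bot _)).trans hz1).ne'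
  set c : ℝ := z.toReal with hc_def
  have hzc : z = (c : EReal) := (EReal.coe_toReal hztop hzbot).symm
  have hcinfL : infL < c := by
    rw [hzc] at hz1; exact_mod_cast hz1
  set δ : ℝ := (c - infL) / 2 with hδ_def
  have hδpos : 0 < δ := by simp only [hδ_def]; linarith
  have E1 : ∀ᶠ n in atTop, c < a n := by
    have := eventually_lt_of_lt_liminf (hzc ▸ hz2)
    filter_upwards [this] with n hn
    exact_mod_cast hn
  have E2 : ∀ᶠ n in atTop, m n < infL + δ := by
    have hlt : Filter.limsup (fun n => ((m n : ℝ) : EReal)) atTop < ((infL + δ : ℝ) : EReal) :=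
      lt_of_le_of_lt hinf1 (by exact_mod_cast (by linarith : infL < infL + δ))
    filter_upwards [eventually_lt_of_limsup_lt hlt] with n hn
    exact_mod_cast hn
  rw [tendsto_order]
  constructor
  · intro b hb
    filter_upwards with n
    exact hb.trans_le ((Qn n) A).coe_nonneg
  · intro b hb
    set η : ℝ := δ * b / 2 with hη_def
    have hηpos : 0 < η := by positivity
    have E3 : ∀ᶠ n in atTop, J (L n) (νn n : Measure Θ) - ((m n : ℝ) : EReal) < (η : EReal) :=
      hνnJ.eventually_lt_const (by exact_mod_cast hηpos)
    have E4 : ∀ᶠ n in atTop, D (νn n) Pr / n < β * η :=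
      hνnD.eventually_lt_const (by positivity)
    filter_upwards [E1, E2, E3, E4, eventually_ge_atTop 1] with n h1 h2 h3 h4 h5
    have hn0 : (0 : ℝ) < n := by exact_mod_cast h5
    have hgap : δ < a n - m n := by
      have : infL + δ = c - δ := by rw [hδ_def]; ring
      linarith
    -- J (L n) (νn n) is a real number y
    have hxbot : ((m n : ℝ) : EReal) ≤ J (L n) (νn n : Measure Θ) :=
      J_const_lower_bound _ _ _ (hmle n)
    have hxtop : J (L n) (νn n : Measure Θ) ≠ ⊤ := by
      intro h
      rw [h] at h3
      simp [EReal.top_sub_coe] at h3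
    have hxne : J (L n) (νn n : Measure Θ) ≠ ⊥ :=
      (lt_of_lt_of_le (EReal.bot_lt_coe _) hxbot).ne'
    set y : ℝ := (J (L n) (νn n : Measure Θ)).toReal with hy_def
    have hx : J (L n) (νn n : Measure Θ) = ((y : ℝ) : EReal) := (EReal.coe_toReal hxtop hxne).symm
    have hy3 : y - m n < η := by
      rw [hx, ← EReal.coe_sub] at h3
      exact_mod_cast h3
    -- minimality
    have hmin := (hQn n).2 (νn n) (hνn𝒬 n)
    have hQle : ((n : ℝ) : EReal) * J (L n) (Qn n : Measure Θ)
        ≤ (((n : ℝ) * y + 1 / β * D (νn n) Pr : ℝ) : EReal) := by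
      have h0 : (0 : EReal) ≤ ((1 / β * D (Qn n) Pr : ℝ) : EReal) := by
        have : (0:ℝ) ≤ 1 / β * D (Qn n) Pr :=
          mul_nonneg (by positivity) (hDnn _ _)
        exact_mod_cast this
      calc ((n : ℝ) : EReal) * J (L n) (Qn n : Measure Θ)
          ≤ T n β (L n) D Pr (Qn n) := le_add_of_nonneg_right h0
        _ ≤ T n β (L n) D Pr (νn n) := hmin
        _ = (((n : ℝ) * y + 1 / β * D (νn n) Pr : ℝ) : EReal) := by
            rw [T, hx, ← EReal.coe_mul, ← EReal.coe_add]
    have hQbot : ((m n : ℝ) : EReal) ≤ J (L n) (Qn n : Measure Θ) :=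
      J_const_lower_bound _ _ _ (hmle n)
    have hQtop : J (L n) (Qn n : Measure Θ) ≠ ⊤ := by
      intro h
      rw [h, EReal.mul_top_of_pos (by exact_mod_cast hn0)] at hQle
      exact (EReal.coe_lt_top _).not_ge hQle
    have hQne : J (L n) (Qn n : Measure Θ) ≠ ⊥ :=
      (lt_of_lt_of_le (EReal.bot_lt_coe _) hQbot).ne'
    set xq : ℝ := (J (L n) (Qn n : Measure Θ)).toReal with hxq_def
    have hxq : J (L n) (Qn n : Measure Θ) = ((xq : ℝ) : EReal) :=
      (EReal.coe_toReal hQtop hQne).symm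
    have hQle' : (n : ℝ) * xq ≤ (n : ℝ) * y + 1 / β * D (νn n) Pr := by
      rw [hxq, ← EReal.coe_mul] at hQle
      exact_mod_cast hQle
    -- lower bound on J at Qn via A
    set p : ℝ := (((Qn n : Measure Θ)) A).toReal with hp_def
    have hplb : p * a n + (1 - p) * m n ≤ xq := by
      have := J_lower_bound (Qn n : Measure Θ) (L n) A hA (a n) (m n) (hmle n) (hale n)
      rw [hxq] at this
      exact_mod_cast this
    have hpcoe : ((Qn n) A : ℝ) = p := by
      rw [hp_def, ← MeasureTheory.ProbabilityMeasure.ennreal_coeFn_eq_coeFn_toMeasure,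
        ENNReal.coe_toReal]
    have hp0 : 0 ≤ p := ENNReal.toReal_nonneg
    -- real arithmetic
    have hDν : D (νn n) Pr < β * η * n := by
      have := (div_lt_iff₀ hn0).1 h4
      linarith
    have hxqm : xq - m n < 2 * η := by
      have hβ' : 1 / β * D (νn n) Pr < η * n := by
        rw [div_mul_eq_mul_div, one_mul, div_lt_iff₀ hβ]
        calc D (νn n) Pr < β * η * n := hDν
          _ = η * n * β := by ring
      have hny : (n : ℝ) * y < (n : ℝ) * (m n + η) :=
        mul_lt_mul_of_pos_left (by linarith) hn0
      have : (n : ℝ) * xq < (n : ℝ) * (m n + 2 * η) := by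
        calc (n:ℝ) * xq ≤ (n : ℝ) * y + 1 / β * D (νn n) Pr := hQle'
          _ < (n : ℝ) * (m n + η) + η * n := by linarith
          _ = (n : ℝ) * (m n + 2 * η) := by ring
      have := (mul_lt_mul_iff_right₀ hn0).1 this
      linarith
    have hpd : p * δ ≤ xq - m n := by
      have h6 : p * δ ≤ p * (a n - m n) := mul_le_mul_of_nonneg_left hgap.le hp0
      nlinarith
    rw [hpcoe]
    have : p * δ < δ * b := by
      rw [hη_def] at hxqm
      linarith
    nlinarith
end
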